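/- For every partition {i,j,k,h} = {1,2,3,4}: (1) Ω⁻_ij ∩ Ω⁻_ik = ∅; (2) Ω⁻_ij = Ω⁻_kh and Ω⁺_ij = Ω⁻_ik ∪ Ω⁻_ih; (3) X⁻_ij = X⁻_kh and X⁺_ij = X⁻_ik ∪ X⁻_ih. -/
import Mathlib

/-- `bfun l i j k` is the quantity `b_h = √(2 c_ij c_ik c_jk + c_ij² + c_ik² + c_jk² − 1)`
attached to the vertex `h` whose three opposite vertices are `i, j, k`
(where `c_rs = cosh l_rs`). -/
noncomputable def bfun (l : Fin 4 → Fin 4 → ℝ) (i j k : Fin 4) : ℝ :=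
  Real.sqrt (2 * Real.cosh (l i j) * Real.cosh (l i k) * Real.cosh (l j k) +
    Real.cosh (l i j) ^ 2 + Real.cosh (l i k) ^ 2 + Real.cosh (l j k) ^ 2 - 1)

/-- `φ_ij(l) = (c_ik c_ih + c_jk c_jh + c_ij c_ik c_jh + c_ij c_ih c_jk − s_ij² c_kh)/(b_k b_h)`,
where `{i,j,k,h} = {1,2,3,4}`, `c_rs = cosh l_rs`, `s_rs = sinh l_rs`,
`b_k = bfun l i j h` and `b_h = bfun l i j k`. -/
noncomputable def phiE (l : Fin 4 → Fin 4 → ℝ) (i j k h : Fin 4) : ℝ :=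
  (Real.cosh (l i k) * Real.cosh (l i h) + Real.cosh (l j k) * Real.cosh (l j h) +
    Real.cosh (l i j) * Real.cosh (l i k) * Real.cosh (l j h) +
    Real.cosh (l i j) * Real.cosh (l i h) * Real.cosh (l j k) -
    Real.sinh (l i j) ^ 2 * Real.cosh (l k h)) /
  (bfun l i j h * bfun l i j k)

/-- The open octant `ℝ⁶_{>0}` of (symmetric) edge length vectors with all entries
positive. -/
def octP : Set (Fin 4 → Fin 4 → ℝ) :=
  {l | (∀ r s, l r s = l s r) ∧ ∀ r s, r ≠ s → 0 < l r s}

/-- `Ω⁺_ij = {l ∈ ℝ⁶_{>0} : φ_ij(l) ≥ 1}` (the vertices `k, h` complete `{i,j}` to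
`{1,2,3,4}`). -/
def OmP (i j k h : Fin 4) : Set (Fin 4 → Fin 4 → ℝ) :=
  {l ∈ octP | 1 ≤ phiE l i j k h}

/-- `Ω⁻_ij = {l ∈ ℝ⁶_{>0} : φ_ij(l) ≤ −1}`. -/
def OmM (i j k h : Fin 4) : Set (Fin 4 → Fin 4 → ℝ) :=
  {l ∈ octP | phiE l i j k h ≤ -1}

/-- `X⁺_ij = {l ∈ ℝ⁶_{>0} : φ_ij(l) = 1}`. -/
def XP (i j k h : Fin 4) : Set (Fin 4 → Fin 4 → ℝ) :=
  {l ∈ octP | phiE l i j k h = 1}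

/-- `X⁻_ij = {l ∈ ℝ⁶_{>0} : φ_ij(l) = −1}`. -/
def XM (i j k h : Fin 4) : Set (Fin 4 → Fin 4 → ℝ) :=
  {l ∈ octP | phiE l i j k h = -1}

/-! ### Auxiliary algebra -/

/-- Numerator pattern: `N_pq` with arguments `(c_pq, c_pr, c_ps, c_qr, c_qs, c_rs)`. -/
def NN (a b c d e f : ℝ) : ℝ := b*c + d*e + a*b*e + a*c*d - (a^2 - 1) * f

/-- `B` pattern (square of `bfun`). -/
def BB (x y z : ℝ) : ℝ := 2*x*y*z + x^2 + y^2 + z^2 - 1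

/-- Determinant of the 4×4 Gram-type matrix with `-1` diagonal and `c` off-diagonal. -/
def DD (a b c d e f : ℝ) : ℝ :=
  a^2*f^2 + b^2*e^2 + c^2*d^2 - a^2 - b^2 - c^2 - d^2 - e^2 - f^2
    - 2*a*b*d - 2*a*c*e - 2*b*c*f - 2*d*e*f - 2*a*b*e*f - 2*a*c*d*f - 2*b*c*d*e + 1

lemma BB_pos {x y z : ℝ} (hx : 1 < x) (hy : 1 < y) (hz : 1 < z) : 0 < BB x y z := by
  unfold BB
  nlinarith [mul_pos (mul_pos (show (0:ℝ) < x by linarith) (show (0:ℝ) < y by linarith))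
    (show (0:ℝ) < z by linarith)]

/-- Abstract "triangle" sign lemma: exactly one of `u, v, w` is negative. -/
lemma tri (u v w crs crt cst g1 g2 g3 P1 P2 P3 S : ℝ)
    (hcrs : 1 < crs) (hcrt : 1 < crt) (hcst : 1 < cst)
    (hg1 : 0 < g1) (hg2 : 0 < g2) (hg3 : 0 < g3)
    (hP1 : 0 < P1) (hP2 : 0 < P2) (hP3 : 0 < P3) (hS : S < 0)
    (hu : u ≠ 0) (hv : v ≠ 0) (hw : w ≠ 0)
    (h1 : crs*v + crt*u - w = P1) (h2 : crs*w + cst*u - v = P2)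
    (h3 : crt*w + cst*v - u = P3) (hdg : g1*w + g2*v + g3*u = S) :
    (u < 0 ∧ 0 < v ∧ 0 < w) ∨ (0 < u ∧ v < 0 ∧ 0 < w) ∨ (0 < u ∧ 0 < v ∧ w < 0) := by
  rcases hu.lt_or_gt with hu' | hu' <;> rcases hv.lt_or_gt with hv' | hv' <;>
    rcases hw.lt_or_gt with hw' | hw'
  · -- u<0, v<0, w<0
    exfalso
    nlinarith [mul_pos (sub_pos.2 hcrs) (neg_pos.2 hv'), mul_pos (sub_pos.2 hcrt) (neg_pos.2 hu'),
      mul_pos (sub_pos.2 hcst) (neg_pos.2 hu')]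
  · -- u<0, v<0, 0<w : apex relation h1
    exfalso
    nlinarith [mul_pos (show (0:ℝ) < crs by linarith) (neg_pos.2 hv'),
      mul_pos (show (0:ℝ) < crt by linarith) (neg_pos.2 hu')]
  · -- u<0, 0<v, w<0 : apex relation h2
    exfalso
    nlinarith [mul_pos (show (0:ℝ) < crs by linarith) (neg_pos.2 hw'),
      mul_pos (show (0:ℝ) < cst by linarith) (neg_pos.2 hu')]
  · exact Or.inl ⟨hu', hv', hw'⟩
  · -- 0<u, v<0, w<0 : apex relation h3
    exfalso
    nlinarith [mul_pos (show (0:ℝ) < crt by linarith) (neg_pos.2 hw'),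
      mul_pos (show (0:ℝ) < cst by linarith) (neg_pos.2 hv')]
  · exact Or.inr (Or.inl ⟨hu', hv', hw'⟩)
  · exact Or.inr (Or.inr ⟨hu', hv', hw'⟩)
  · -- all positive : diagonal relation
    exfalso
    nlinarith [mul_pos hg1 hw', mul_pos hg2 hv', mul_pos hg3 hu']

/-- Under `0 ≤ D`, the negative numerators form exactly one "opposite pair". -/
lemma matching (a b c d e f : ℝ) (ha : 1 < a) (hb : 1 < b) (hc : 1 < c)
    (hd : 1 < d) (he : 1 < e) (hf : 1 < f) (hD : 0 ≤ DD a b c d e f) :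
    (NN a b c d e f < 0 ∧ NN f b d c e a < 0 ∧ 0 < NN b a c d f e ∧ 0 < NN e a d c f b ∧
      0 < NN c a b e f d ∧ 0 < NN d a e b f c) ∨
    (NN b a c d f e < 0 ∧ NN e a d c f b < 0 ∧ 0 < NN a b c d e f ∧ 0 < NN f b d c e a ∧
      0 < NN c a b e f d ∧ 0 < NN d a e b f c) ∨
    (NN c a b e f d < 0 ∧ NN d a e b f c < 0 ∧ 0 < NN a b c d e f ∧ 0 < NN f b d c e a ∧
      0 < NN b a c d f e ∧ 0 < NN e a d c f b) := by
  have hBi := BB_pos hd he hf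
  have hBj := BB_pos hb hc hf
  have hBk := BB_pos ha hc he
  have hBh := BB_pos ha hb hd
  -- nonvanishing of the six numerators
  have ne_ij : NN a b c d e f ≠ 0 := by
    have hq : (NN a b c d e f)^2 = BB a c e * BB a b d + DD a b c d e f * (a^2-1) := by
      unfold NN BB DD; ring
    intro h0; rw [h0] at hq
    nlinarith [mul_pos hBk hBh, mul_nonneg hD (show (0:ℝ) ≤ a^2-1 by nlinarith)]
  have ne_ik : NN b a c d f e ≠ 0 := by
    have hq : (NN b a c d f e)^2 = BB b c f * BB a b d + DD a b c d e f * (b^2-1) := by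
      unfold NN BB DD; ring
    intro h0; rw [h0] at hq
    nlinarith [mul_pos hBj hBh, mul_nonneg hD (show (0:ℝ) ≤ b^2-1 by nlinarith)]
  have ne_ih : NN c a b e f d ≠ 0 := by
    have hq : (NN c a b e f d)^2 = BB b c f * BB a c e + DD a b c d e f * (c^2-1) := by
      unfold NN BB DD; ring
    intro h0; rw [h0] at hq
    nlinarith [mul_pos hBj hBk, mul_nonneg hD (show (0:ℝ) ≤ c^2-1 by nlinarith)]
  have ne_jk : NN d a e b f c ≠ 0 := by
    have hq : (NN d a e b f c)^2 = BB d e f * BB a b d + DD a b c d e f * (d^2-1) := by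
      unfold NN BB DD; ring
    intro h0; rw [h0] at hq
    nlinarith [mul_pos hBi hBh, mul_nonneg hD (show (0:ℝ) ≤ d^2-1 by nlinarith)]
  have ne_jh : NN e a d c f b ≠ 0 := by
    have hq : (NN e a d c f b)^2 = BB d e f * BB a c e + DD a b c d e f * (e^2-1) := by
      unfold NN BB DD; ring
    intro h0; rw [h0] at hq
    nlinarith [mul_pos hBi hBk, mul_nonneg hD (show (0:ℝ) ≤ e^2-1 by nlinarith)]
  have ne_kh : NN f b d c e a ≠ 0 := by
    have hq : (NN f b d c e a)^2 = BB d e f * BB b c f + DD a b c d e f * (f^2-1) := by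
      unfold NN BB DD; ring
    intro h0; rw [h0] at hq
    nlinarith [mul_pos hBi hBj, mul_nonneg hD (show (0:ℝ) ≤ f^2-1 by nlinarith)]
  -- the four triangle lemmas
  have t1 := tri (NN a b c d e f) (NN b a c d f e) (NN d a e b f c) a b d c e f
    (BB a b d * c) (BB a b d * e) (BB a b d * f) (-(DD a b c d e f) - BB a b d)
    ha hb hd (by linarith) (by linarith) (by linarith)
    (mul_pos hBh (by linarith)) (mul_pos hBh (by linarith)) (mul_pos hBh (by linarith))
    (by linarith) ne_ij ne_ik ne_jk
    (by unfold NN BB; ring) (by unfold NN BB; ring) (by unfold NN BB; ring)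
    (by unfold NN BB DD; ring)
  have t2 := tri (NN a b c d e f) (NN c a b e f d) (NN e a d c f b) a c e b d f
    (BB a c e * b) (BB a c e * d) (BB a c e * f) (-(DD a b c d e f) - BB a c e)
    ha hc he (by linarith) (by linarith) (by linarith)
    (mul_pos hBk (by linarith)) (mul_pos hBk (by linarith)) (mul_pos hBk (by linarith))
    (by linarith) ne_ij ne_ih ne_jh
    (by unfold NN BB; ring) (by unfold NN BB; ring) (by unfold NN BB; ring)
    (by unfold NN BB DD; ring)
  have t3 := tri (NN b a c d f e) (NN c a b e f d) (NN f b d c e a) b c f a d e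
    (BB b c f * a) (BB b c f * d) (BB b c f * e) (-(DD a b c d e f) - BB b c f)
    hb hc hf (by linarith) (by linarith) (by linarith)
    (mul_pos hBj (by linarith)) (mul_pos hBj (by linarith)) (mul_pos hBj (by linarith))
    (by linarith) ne_ik ne_ih ne_kh
    (by unfold NN BB; ring) (by unfold NN BB; ring) (by unfold NN BB; ring)
    (by unfold NN BB DD; ring)
  have t4 := tri (NN d a e b f c) (NN e a d c f b) (NN f b d c e a) d e f a b c
    (BB d e f * a) (BB d e f * b) (BB d e f * c) (-(DD a b c d e f) - BB d e f)
    hd he hf (by linarith) (by linarith) (by linarith)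
    (mul_pos hBi (by linarith)) (mul_pos hBi (by linarith)) (mul_pos hBi (by linarith))
    (by linarith) ne_jk ne_jh ne_kh
    (by unfold NN BB; ring) (by unfold NN BB; ring) (by unfold NN BB; ring)
    (by unfold NN BB DD; ring)
  rcases t1 with ⟨h_ij, h_ik, h_jk⟩ | ⟨h_ij, h_ik, h_jk⟩ | ⟨h_ij, h_ik, h_jk⟩
  · -- N_ij < 0
    rcases t2 with ⟨_, h_ih, h_jh⟩ | ⟨h2a, _, _⟩ | ⟨h2a, _, _⟩
    · rcases t3 with ⟨h3a, _, _⟩ | ⟨_, h3a, _⟩ | ⟨_, _, h_kh⟩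
      · exact (lt_asymm h3a h_ik).elim
      · exact (lt_asymm h3a h_ih).elim
      · exact Or.inl ⟨h_ij, h_kh, h_ik, h_jh, h_ih, h_jk⟩
    · exact (lt_asymm h_ij h2a).elim
    · exact (lt_asymm h_ij h2a).elim
  · -- N_ik < 0
    rcases t3 with ⟨_, h_ih, h_kh⟩ | ⟨h3a, _, _⟩ | ⟨h3a, _, _⟩
    · rcases t4 with ⟨h4a, _, _⟩ | ⟨_, h_jh, _⟩ | ⟨_, _, h4a⟩
      · exact (lt_asymm h4a h_jk).elim
      · exact Or.inr (Or.inl ⟨h_ik, h_jh, h_ij, h_kh, h_ih, h_jk⟩)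
      · exact (lt_asymm h4a h_kh).elim
    · exact (lt_asymm h_ik h3a).elim
    · exact (lt_asymm h_ik h3a).elim
  · -- N_jk < 0
    rcases t4 with ⟨_, h_jh, h_kh⟩ | ⟨h4a, _, _⟩ | ⟨h4a, _, _⟩
    · rcases t2 with ⟨h2a, _, _⟩ | ⟨_, h_ih, _⟩ | ⟨_, _, h2a⟩
      · exact (lt_asymm h2a h_ij).elim
      · exact Or.inr (Or.inr ⟨h_ih, h_jk, h_ij, h_kh, h_ik, h_jh⟩)
      · exact (lt_asymm h2a h_jh).elim
    · exact (lt_asymm h_jk h4a).elim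
    · exact (lt_asymm h_jk h4a).elim

/-- Characterisation of the four `φ`-conditions in terms of signs of `N` and `D`. -/
lemma phi_char (Nv B1 B2 Dv s2 : ℝ) (hB1 : 0 < B1) (hB2 : 0 < B2) (hs : 0 < s2)
    (hid : Nv ^ 2 = B1 * B2 + Dv * s2) :
    (Nv / (Real.sqrt B1 * Real.sqrt B2) ≤ -1 ↔ 0 ≤ Dv ∧ Nv < 0) ∧
    (1 ≤ Nv / (Real.sqrt B1 * Real.sqrt B2) ↔ 0 ≤ Dv ∧ 0 < Nv) ∧
    (Nv / (Real.sqrt B1 * Real.sqrt B2) = -1 ↔ Dv = 0 ∧ Nv < 0) ∧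
    (Nv / (Real.sqrt B1 * Real.sqrt B2) = 1 ↔ Dv = 0 ∧ 0 < Nv) := by
  have hb : 0 < Real.sqrt B1 * Real.sqrt B2 :=
    mul_pos (Real.sqrt_pos.2 hB1) (Real.sqrt_pos.2 hB2)
  have hβ2 : (Real.sqrt B1 * Real.sqrt B2) ^ 2 = B1 * B2 := by
    rw [mul_pow, Real.sq_sqrt hB1.le, Real.sq_sqrt hB2.le]
  set β := Real.sqrt B1 * Real.sqrt B2 with hβdef
  have key : Nv ^ 2 - β ^ 2 = Dv * s2 := by rw [hid, hβ2]; ring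
  refine ⟨⟨?_, ?_⟩, ⟨?_, ?_⟩, ⟨?_, ?_⟩, ⟨?_, ?_⟩⟩
  · intro hle
    rw [div_le_iff₀ hb] at hle
    have h1 : Nv ≤ -β := by linarith
    have hneg : Nv < 0 := by linarith
    refine ⟨?_, hneg⟩
    have h2 : 0 ≤ (β - Nv) * (-β - Nv) := mul_nonneg (by linarith) (by linarith)
    by_contra hD
    push_neg at hD
    nlinarith [mul_pos (neg_pos.2 hD) hs]
  · rintro ⟨hD, hneg⟩
    rw [div_le_iff₀ hb]
    have h3 : 0 ≤ Dv * s2 := mul_nonneg hD hs.le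
    nlinarith
  · intro hle
    rw [le_div_iff₀ hb] at hle
    have h1 : β ≤ Nv := by linarith
    have hpos : 0 < Nv := lt_of_lt_of_le hb h1
    refine ⟨?_, hpos⟩
    have h2 : 0 ≤ (Nv - β) * (Nv + β) := mul_nonneg (by linarith) (by linarith)
    by_contra hD
    push_neg at hD
    nlinarith [mul_pos (neg_pos.2 hD) hs]
  · rintro ⟨hD, hpos⟩
    rw [le_div_iff₀ hb]
    have h3 : 0 ≤ Dv * s2 := mul_nonneg hD hs.le
    nlinarith
  · intro heq
    rw [div_eq_iff hb.ne'] at heq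
    have h1 : Nv = -β := by linarith
    have hneg : Nv < 0 := by rw [h1]; linarith
    refine ⟨?_, hneg⟩
    have h2 : Dv * s2 = 0 := by nlinarith
    rcases mul_eq_zero.1 h2 with h | h
    · exact h
    · exact absurd h hs.ne'
  · rintro ⟨hD, hneg⟩
    rw [div_eq_iff hb.ne']
    have h2 : Nv ^ 2 = β ^ 2 := by rw [hid, hβ2, hD]; ring
    have h3 : (Nv - β) * (Nv + β) = 0 := by nlinarith
    rcases mul_eq_zero.1 h3 with h | h
    · nlinarith
    · linarith
  · intro heq
    rw [div_eq_iff hb.ne'] at heq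
    have h1 : Nv = β := by linarith
    have hpos : 0 < Nv := by rw [h1]; exact hb
    refine ⟨?_, hpos⟩
    have h2 : Dv * s2 = 0 := by nlinarith
    rcases mul_eq_zero.1 h2 with h | h
    · exact h
    · exact absurd h hs.ne'
  · rintro ⟨hD, hpos⟩
    rw [div_eq_iff hb.ne']
    have h2 : Nv ^ 2 = β ^ 2 := by rw [hid, hβ2, hD]; ring
    have h3 : (Nv - β) * (Nv + β) = 0 := by nlinarith
    rcases mul_eq_zero.1 h3 with h | h
    · linarith
    · nlinarith

/-- Pure real-number form of the main statement. -/
lemma realcore (a b c d e f : ℝ) (ha : 1 < a) (hb : 1 < b) (hc : 1 < c)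
    (hd : 1 < d) (he : 1 < e) (hf : 1 < f) :
    (¬(NN a b c d e f / (Real.sqrt (BB a c e) * Real.sqrt (BB a b d)) ≤ -1 ∧
       NN b a c d f e / (Real.sqrt (BB b c f) * Real.sqrt (BB b a d)) ≤ -1)) ∧
    ((NN a b c d e f / (Real.sqrt (BB a c e) * Real.sqrt (BB a b d)) ≤ -1) ↔
      (NN f b d c e a / (Real.sqrt (BB f d e) * Real.sqrt (BB f b c)) ≤ -1)) ∧
    ((1 ≤ NN a b c d e f / (Real.sqrt (BB a c e) * Real.sqrt (BB a b d))) ↔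
      (NN b a c d f e / (Real.sqrt (BB b c f) * Real.sqrt (BB b a d)) ≤ -1 ∨
       NN c a b e f d / (Real.sqrt (BB c b f) * Real.sqrt (BB c a e)) ≤ -1)) ∧
    ((NN a b c d e f / (Real.sqrt (BB a c e) * Real.sqrt (BB a b d)) = -1) ↔
      (NN f b d c e a / (Real.sqrt (BB f d e) * Real.sqrt (BB f b c)) = -1)) ∧
    ((NN a b c d e f / (Real.sqrt (BB a c e) * Real.sqrt (BB a b d)) = 1) ↔
      (NN b a c d f e / (Real.sqrt (BB b c f) * Real.sqrt (BB b a d)) = -1 ∨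
       NN c a b e f d / (Real.sqrt (BB c b f) * Real.sqrt (BB c a e)) = -1)) := by
  have hBi := BB_pos hd he hf
  have hBj := BB_pos hb hc hf
  have hBk := BB_pos ha hc he
  have hBh := BB_pos ha hb hd
  have hBba : (0:ℝ) < BB b a d := by rw [show BB b a d = BB a b d by unfold BB; ring]; exact hBh
  have hBcb : (0:ℝ) < BB c b f := by rw [show BB c b f = BB b c f by unfold BB; ring]; exact hBj
  have hBca : (0:ℝ) < BB c a e := by rw [show BB c a e = BB a c e by unfold BB; ring]; exact hBk
  have hBfd : (0:ℝ) < BB f d e := by rw [show BB f d e = BB d e f by unfold BB; ring]; exact hBi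
  have hBfb : (0:ℝ) < BB f b c := by rw [show BB f b c = BB b c f by unfold BB; ring]; exact hBj
  obtain ⟨c1a, c1b, c1c, c1d⟩ := phi_char (NN a b c d e f) (BB a c e) (BB a b d)
    (DD a b c d e f) (a^2-1) hBk hBh (by nlinarith)
    (by unfold NN BB DD; ring)
  obtain ⟨c2a, _, c2c, _⟩ := phi_char (NN b a c d f e) (BB b c f) (BB b a d)
    (DD a b c d e f) (b^2-1) hBj hBba (by nlinarith)
    (by unfold NN BB DD; ring)
  obtain ⟨c3a, _, c3c, _⟩ := phi_char (NN c a b e f d) (BB c b f) (BB c a e)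
    (DD a b c d e f) (c^2-1) hBcb hBca (by nlinarith)
    (by unfold NN BB DD; ring)
  obtain ⟨c4a, _, c4c, _⟩ := phi_char (NN f b d c e a) (BB f d e) (BB f b c)
    (DD a b c d e f) (f^2-1) hBfd hBfb (by nlinarith)
    (by unfold NN BB DD; ring)
  have hm := matching a b c d e f ha hb hc hd he hf
  refine ⟨?_, ?_, ?_, ?_, ?_⟩
  · rintro ⟨h1, h2⟩
    rw [c1a] at h1; rw [c2a] at h2
    rcases hm h1.1 with ⟨p1, p2, p3, p4, p5, p6⟩ | ⟨p1, p2, p3, p4, p5, p6⟩ |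
      ⟨p1, p2, p3, p4, p5, p6⟩ <;> linarith [h1.2, h2.2]
  · rw [c1a, c4a]
    constructor
    · rintro ⟨hD0, hN⟩
      refine ⟨hD0, ?_⟩
      rcases hm hD0 with ⟨p1, p2, p3, p4, p5, p6⟩ | ⟨p1, p2, p3, p4, p5, p6⟩ |
        ⟨p1, p2, p3, p4, p5, p6⟩
      · exact p2
      · linarith
      · linarith
    · rintro ⟨hD0, hN⟩
      refine ⟨hD0, ?_⟩
      rcases hm hD0 with ⟨p1, p2, p3, p4, p5, p6⟩ | ⟨p1, p2, p3, p4, p5, p6⟩ |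
        ⟨p1, p2, p3, p4, p5, p6⟩
      · exact p1
      · linarith
      · linarith
  · rw [c1b, c2a, c3a]
    constructor
    · rintro ⟨hD0, hN⟩
      rcases hm hD0 with ⟨p1, p2, p3, p4, p5, p6⟩ | ⟨p1, p2, p3, p4, p5, p6⟩ |
        ⟨p1, p2, p3, p4, p5, p6⟩
      · linarith
      · exact Or.inl ⟨hD0, p1⟩
      · exact Or.inr ⟨hD0, p1⟩
    · rintro (⟨hD0, hN⟩ | ⟨hD0, hN⟩) <;> refine ⟨hD0, ?_⟩ <;>
        rcases hm hD0 with ⟨p1, p2, p3, p4, p5, p6⟩ | ⟨p1, p2, p3, p4, p5, p6⟩ |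
          ⟨p1, p2, p3, p4, p5, p6⟩ <;> linarith
  · rw [c1c, c4c]
    constructor
    · rintro ⟨hD0, hN⟩
      refine ⟨hD0, ?_⟩
      rcases hm hD0.ge with ⟨p1, p2, p3, p4, p5, p6⟩ | ⟨p1, p2, p3, p4, p5, p6⟩ |
        ⟨p1, p2, p3, p4, p5, p6⟩
      · exact p2
      · linarith
      · linarith
    · rintro ⟨hD0, hN⟩
      refine ⟨hD0, ?_⟩
      rcases hm hD0.ge with ⟨p1, p2, p3, p4, p5, p6⟩ | ⟨p1, p2, p3, p4, p5, p6⟩ |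
        ⟨p1, p2, p3, p4, p5, p6⟩
      · exact p1
      · linarith
      · linarith
  · rw [c1d, c2c, c3c]
    constructor
    · rintro ⟨hD0, hN⟩
      rcases hm hD0.ge with ⟨p1, p2, p3, p4, p5, p6⟩ | ⟨p1, p2, p3, p4, p5, p6⟩ |
        ⟨p1, p2, p3, p4, p5, p6⟩
      · linarith
      · exact Or.inl ⟨hD0, p1⟩
      · exact Or.inr ⟨hD0, p1⟩
    · rintro (⟨hD0, hN⟩ | ⟨hD0, hN⟩) <;> refine ⟨hD0, ?_⟩ <;>
        rcases hm hD0.ge with ⟨p1, p2, p3, p4, p5, p6⟩ | ⟨p1, p2, p3, p4, p5, p6⟩ |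
          ⟨p1, p2, p3, p4, p5, p6⟩ <;> linarith

theorem stmt15 (i j k h : Fin 4) (hij : i ≠ j) (hik : i ≠ k) (hih : i ≠ h)
    (hjk : j ≠ k) (hjh : j ≠ h) (hkh : k ≠ h) :
    OmM i j k h ∩ OmM i k j h = ∅ ∧
    OmM i j k h = OmM k h i j ∧
    OmP i j k h = OmM i k j h ∪ OmM i h j k ∧
    XM i j k h = XM k h i j ∧
    XP i j k h = XM i k j h ∪ XM i h j k := by
  have main : ∀ l ∈ octP,
      (¬(phiE l i j k h ≤ -1 ∧ phiE l i k j h ≤ -1)) ∧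
      (phiE l i j k h ≤ -1 ↔ phiE l k h i j ≤ -1) ∧
      (1 ≤ phiE l i j k h ↔ (phiE l i k j h ≤ -1 ∨ phiE l i h j k ≤ -1)) ∧
      (phiE l i j k h = -1 ↔ phiE l k h i j = -1) ∧
      (phiE l i j k h = 1 ↔ (phiE l i k j h = -1 ∨ phiE l i h j k = -1)) := by
    intro l hl
    obtain ⟨hsym, hpos⟩ := hl
    have hcosh : ∀ r s : Fin 4, r ≠ s → 1 < Real.cosh (l r s) := fun r s hrs =>
      Real.one_lt_cosh.2 (ne_of_gt (hpos r s hrs))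
    have hrc := realcore (Real.cosh (l i j)) (Real.cosh (l i k)) (Real.cosh (l i h))
      (Real.cosh (l j k)) (Real.cosh (l j h)) (Real.cosh (l k h))
      (hcosh i j hij) (hcosh i k hik) (hcosh i h hih)
      (hcosh j k hjk) (hcosh j h hjh) (hcosh k h hkh)
    have hp1 : phiE l i j k h = NN (Real.cosh (l i j)) (Real.cosh (l i k)) (Real.cosh (l i h))
        (Real.cosh (l j k)) (Real.cosh (l j h)) (Real.cosh (l k h)) /
        (Real.sqrt (BB (Real.cosh (l i j)) (Real.cosh (l i h)) (Real.cosh (l j h))) *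
         Real.sqrt (BB (Real.cosh (l i j)) (Real.cosh (l i k)) (Real.cosh (l j k)))) := by
      unfold phiE bfun NN BB
      rw [Real.sinh_sq]
    have hp2 : phiE l i k j h = NN (Real.cosh (l i k)) (Real.cosh (l i j)) (Real.cosh (l i h))
        (Real.cosh (l j k)) (Real.cosh (l k h)) (Real.cosh (l j h)) /
        (Real.sqrt (BB (Real.cosh (l i k)) (Real.cosh (l i h)) (Real.cosh (l k h))) *
         Real.sqrt (BB (Real.cosh (l i k)) (Real.cosh (l i j)) (Real.cosh (l j k)))) := by
      unfold phiE bfun NN BB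
      rw [hsym k j, Real.sinh_sq]
    have hp3 : phiE l i h j k = NN (Real.cosh (l i h)) (Real.cosh (l i j)) (Real.cosh (l i k))
        (Real.cosh (l j h)) (Real.cosh (l k h)) (Real.cosh (l j k)) /
        (Real.sqrt (BB (Real.cosh (l i h)) (Real.cosh (l i k)) (Real.cosh (l k h))) *
         Real.sqrt (BB (Real.cosh (l i h)) (Real.cosh (l i j)) (Real.cosh (l j h)))) := by
      unfold phiE bfun NN BB
      rw [hsym h j, hsym h k, Real.sinh_sq]
    have hp4 : phiE l k h i j = NN (Real.cosh (l k h)) (Real.cosh (l i k)) (Real.cosh (l j k))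
        (Real.cosh (l i h)) (Real.cosh (l j h)) (Real.cosh (l i j)) /
        (Real.sqrt (BB (Real.cosh (l k h)) (Real.cosh (l j k)) (Real.cosh (l j h))) *
         Real.sqrt (BB (Real.cosh (l k h)) (Real.cosh (l i k)) (Real.cosh (l i h)))) := by
      unfold phiE bfun NN BB
      rw [hsym k i, hsym k j, hsym h i, hsym h j, Real.sinh_sq]
    rw [← hp1, ← hp2, ← hp3, ← hp4] at hrc
    exact hrc
  refine ⟨?_, ?_, ?_, ?_, ?_⟩
  · apply Set.eq_empty_iff_forall_notMem.2
    rintro l ⟨⟨hl, h1⟩, ⟨-, h2⟩⟩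
    exact (main l hl).1 ⟨h1, h2⟩
  · ext l
    constructor
    · rintro ⟨hl, h1⟩
      exact ⟨hl, ((main l hl).2.1).mp h1⟩
    · rintro ⟨hl, h1⟩
      exact ⟨hl, ((main l hl).2.1).mpr h1⟩
  · ext l
    constructor
    · rintro ⟨hl, h1⟩
      rcases ((main l hl).2.2.1).mp h1 with h | h
      · exact Or.inl ⟨hl, h⟩
      · exact Or.inr ⟨hl, h⟩
    · rintro (⟨hl, h1⟩ | ⟨hl, h1⟩)
      · exact ⟨hl, ((main l hl).2.2.1).mpr (Or.inl h1)⟩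
      · exact ⟨hl, ((main l hl).2.2.1).mpr (Or.inr h1)⟩
  · ext l
    constructor
    · rintro ⟨hl, h1⟩
      exact ⟨hl, ((main l hl).2.2.2.1).mp h1⟩
    · rintro ⟨hl, h1⟩
      exact ⟨hl, ((main l hl).2.2.2.1).mpr h1⟩
  · ext l
    constructor
    · rintro ⟨hl, h1⟩
      rcases ((main l hl).2.2.2.2).mp h1 with h | h
      · exact Or.inl ⟨hl, h⟩
      · exact Or.inr ⟨hl, h⟩
    · rintro (⟨hl, h1⟩ | ⟨hl, h1⟩)
      · exact ⟨hl, ((main l hl).2.2.2.2).mpr (Or.inl h1)⟩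
      · exact ⟨hl, ((main l hl).2.2.2.2).mpr (Or.inr h1)⟩
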